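/- arXiv:2202.07514 — 2 statements merged into one kernel-verified Lean document; each statement's English description precedes it below -/
import Mathlib

section
/- Under these hypotheses (the four correlators of the inequality I₃ are each within ε of their ideal values), one has ‖(AᵢBᵢ + BᵢAᵢ)ψ‖ ≤ 4√(2ε) for every i ∈ {1,2,3}. -/
/-!
Write `P = A₁B₂B₃`, `Q = B₁A₂B₃`, `R = B₁B₂A₃`, `S = A₁A₂A₃` (indices `1, 2, 3` are `0, 1, 2` in
`Fin 3`). Observables are isometries, so a correlator close to `±1` means that `ψ` is nearly fixed
by `P`, `Q`, `R` and nearly negated by `S`: `‖Pψ - ψ‖ ≤ √(2ε)` and so on. Each anticommutator,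
multiplied on the left by a product of two observables, is a sum of two such products:
`A₃B₃(A₁B₁ + B₁A₁) = SQ + RP`, `A₁B₁(A₂B₂ + B₂A₂) = SR + PQ`, `A₁B₁(A₃B₃ + B₃A₃) = SQ + PR`.
Applied to `ψ`, the two products are within `2√(2ε)` of `-ψ` and of `ψ` respectively, so the sum
has norm at most `4√(2ε)`.
-/

open RCLike

theorem LinearMap.IsSymmetric.norm_map_of_involutive {𝕜 E : Type*} [RCLike 𝕜]
    [NormedAddCommGroup E] [InnerProductSpace 𝕜 E] {T : E →ₗ[𝕜] E} (hT : T.IsSymmetric)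
    (hinv : Function.Involutive T) (x : E) : ‖T x‖ = ‖x‖ := by
  rw [norm_eq_sqrt_re_inner (𝕜 := 𝕜), norm_eq_sqrt_re_inner (𝕜 := 𝕜) x, hT, hinv]

theorem dist_le_sqrt_of_one_sub_le_re_inner {𝕜 E : Type*} [RCLike 𝕜] [NormedAddCommGroup E]
    [InnerProductSpace 𝕜 E] {ψ p : E} {ε : ℝ} (hψ : ‖ψ‖ = 1) (hp : ‖p‖ = 1)
    (h : 1 - ε ≤ re (inner 𝕜 ψ p)) : dist p ψ ≤ √(2 * ε) := by
  apply Real.le_sqrt_of_sq_le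
  rw [dist_eq_norm, @norm_sub_sq 𝕜, hp, hψ, inner_re_symm]
  linarith

theorem Isometry.dist_map_le_dist_map_add_dist {α β : Type*} [PseudoMetricSpace α]
    [PseudoMetricSpace β] {f : α → β} (hf : Isometry f) (x y : α) (z : β) :
    dist (f x) z ≤ dist (f y) z + dist x y :=
  calc dist (f x) z ≤ dist (f x) (f y) + dist (f y) z := dist_triangle _ _ _
    _ = dist (f y) z + dist x y := by rw [hf.dist_eq, add_comm]

theorem mermin_anticommutator_identities {E F : Type*} [Add E] [FunLike F E E]
    [AddHomClass F E E] (A B : Fin 3 → F)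
    (hAinv : ∀ i x, A i (A i x) = x) (hBinv : ∀ i x, B i (B i x) = x)
    (hAA : ∀ i j, i ≠ j → ∀ x, A i (A j x) = A j (A i x))
    (hAB : ∀ i j, i ≠ j → ∀ x, A i (B j x) = B j (A i x))
    (hBB : ∀ i j, i ≠ j → ∀ x, B i (B j x) = B j (B i x)) (x : E) :
    A 2 (B 2 (A 0 (B 0 x) + B 0 (A 0 x)))
        = A 0 (A 1 (A 2 (B 0 (A 1 (B 2 x))))) + B 0 (B 1 (A 2 (A 0 (B 1 (B 2 x))))) ∧
      A 0 (B 0 (A 1 (B 1 x) + B 1 (A 1 x)))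
        = A 0 (A 1 (A 2 (B 0 (B 1 (A 2 x))))) + A 0 (B 1 (B 2 (B 0 (A 1 (B 2 x))))) ∧
      A 0 (B 0 (A 2 (B 2 x) + B 2 (A 2 x)))
        = A 0 (A 1 (A 2 (B 0 (A 1 (B 2 x))))) + A 0 (B 1 (B 2 (B 0 (B 1 (A 2 x))))) := by
  -- Commuting operators of lower index outwards sorts each word; both sides sort to the same words.
  refine ⟨?_, ?_, ?_⟩ <;>
  simp only [map_add, hAinv, hBinv, hAA 2 0 (by decide), hAA 2 1 (by decide),
    hBB 1 0 (by decide), hBB 2 0 (by decide), hBB 2 1 (by decide),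
    hAB 1 0 (by decide), hAB 2 0 (by decide), hAB 2 1 (by decide), ← hAB 0 1 (by decide),
    ← hAB 0 2 (by decide), ← hAB 1 2 (by decide)]

section NearStabilizer

variable {E F : Type*} [SeminormedAddCommGroup E]

theorem norm_add_le_four_mul_of_dist_le {S U : E → E} (hS : Isometry S) (hU : Isometry U)
    {ψ q p : E} {δ : ℝ} (hSψ : dist (S ψ) (-ψ) ≤ δ) (hUψ : dist (U ψ) ψ ≤ δ)
    (hq : dist q ψ ≤ δ) (hp : dist p ψ ≤ δ) : ‖S q + U p‖ ≤ 4 * δ := by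
  have hSq := hS.dist_map_le_dist_map_add_dist q ψ (-ψ)
  have hUp := hU.dist_map_le_dist_map_add_dist p ψ ψ
  calc ‖S q + U p‖ = ‖(S q - -ψ) + (U p - ψ)‖ := by congr 1; abel
    _ ≤ dist (S q) (-ψ) + dist (U p) ψ := by rw [dist_eq_norm, dist_eq_norm]; exact norm_add_le _ _
    _ ≤ 4 * δ := by linarith

variable [FunLike F E E] [AddMonoidHomClass F E E]

theorem norm_anticommutator_le_of_near_stabilizer (A B : Fin 3 → F)
    (hA : ∀ i, Isometry (A i)) (hB : ∀ i, Isometry (B i))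
    (hAinv : ∀ i x, A i (A i x) = x) (hBinv : ∀ i x, B i (B i x) = x)
    (hAA : ∀ i j, i ≠ j → ∀ x, A i (A j x) = A j (A i x))
    (hAB : ∀ i j, i ≠ j → ∀ x, A i (B j x) = B j (A i x))
    (hBB : ∀ i j, i ≠ j → ∀ x, B i (B j x) = B j (B i x)) {ψ : E} {δ : ℝ}
    (hP : dist (A 0 (B 1 (B 2 ψ))) ψ ≤ δ) (hQ : dist (B 0 (A 1 (B 2 ψ))) ψ ≤ δ)
    (hR : dist (B 0 (B 1 (A 2 ψ))) ψ ≤ δ) (hS : dist (A 0 (A 1 (A 2 ψ))) (-ψ) ≤ δ) :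
    ∀ i, ‖A i (B i ψ) + B i (A i ψ)‖ ≤ 4 * δ := by
  have hSiso := (hA 0).comp ((hA 1).comp (hA 2))
  have hnorm : ∀ T : F, Isometry T → ∀ x, ‖T x‖ = ‖x‖ :=
    fun T hT => hT.norm_map_of_map_zero (map_zero T)
  obtain ⟨e₀, e₁, e₂⟩ := mermin_anticommutator_identities A B hAinv hBinv hAA hAB hBB ψ
  intro i
  match i with
  | 0 =>
    rw [← hnorm _ (hB 2), ← hnorm _ (hA 2), e₀]
    exact norm_add_le_four_mul_of_dist_le hSiso ((hB 0).comp ((hB 1).comp (hA 2))) hS hR hQ hP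
  | 1 =>
    rw [← hnorm _ (hB 0), ← hnorm _ (hA 0), e₁]
    exact norm_add_le_four_mul_of_dist_le hSiso ((hA 0).comp ((hB 1).comp (hB 2))) hS hP hR hQ
  | 2 =>
    rw [← hnorm _ (hB 0), ← hnorm _ (hA 0), e₂]
    exact norm_add_le_four_mul_of_dist_le hSiso ((hA 0).comp ((hB 1).comp (hB 2))) hS hP hQ hR

end NearStabilizer

theorem stmt16_general {H : Type*} [NormedAddCommGroup H] [InnerProductSpace ℂ H]
    (A B : Fin 3 → H →L[ℂ] H)
    (hAsa : ∀ i (x y : H), (inner ℂ (A i x) y : ℂ) = inner ℂ x (A i y))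
    (hBsa : ∀ i (x y : H), (inner ℂ (B i x) y : ℂ) = inner ℂ x (B i y))
    (hAinv : ∀ i (x : H), A i (A i x) = x)
    (hBinv : ∀ i (x : H), B i (B i x) = x)
    (hAA : ∀ i j, i ≠ j → ∀ x : H, A i (A j x) = A j (A i x))
    (hAB : ∀ i j, i ≠ j → ∀ x : H, A i (B j x) = B j (A i x))
    (hBB : ∀ i j, i ≠ j → ∀ x : H, B i (B j x) = B j (B i x))
    (ψ : H) (hψ : ‖ψ‖ = 1)
    (ε : ℝ)
    (h1 : (inner ℂ ψ (A 0 (B 1 (B 2 ψ))) : ℂ).re ≥ 1 - ε)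
    (h2 : (inner ℂ ψ (B 0 (A 1 (B 2 ψ))) : ℂ).re ≥ 1 - ε)
    (h3 : (inner ℂ ψ (B 0 (B 1 (A 2 ψ))) : ℂ).re ≥ 1 - ε)
    (h4 : -(inner ℂ ψ (A 0 (A 1 (A 2 ψ))) : ℂ).re ≥ 1 - ε) :
    ∀ i, ‖A i (B i ψ) + B i (A i ψ)‖ ≤ 4 * Real.sqrt (2 * ε) := by
  have hAn : ∀ i x, ‖A i x‖ = ‖x‖ := fun i =>
    LinearMap.IsSymmetric.norm_map_of_involutive (T := (A i : H →ₗ[ℂ] H)) (hAsa i) (hAinv i)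
  have hBn : ∀ i x, ‖B i x‖ = ‖x‖ := fun i =>
    LinearMap.IsSymmetric.norm_map_of_involutive (T := (B i : H →ₗ[ℂ] H)) (hBsa i) (hBinv i)
  refine norm_anticommutator_le_of_near_stabilizer A B
    (fun i => AddMonoidHomClass.isometry_of_norm _ (hAn i))
    (fun i => AddMonoidHomClass.isometry_of_norm _ (hBn i)) hAinv hBinv hAA hAB hBB
    (dist_le_sqrt_of_one_sub_le_re_inner (𝕜 := ℂ) hψ (by simp only [hAn, hBn, hψ]) h1)
    (dist_le_sqrt_of_one_sub_le_re_inner (𝕜 := ℂ) hψ (by simp only [hAn, hBn, hψ]) h2)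
    (dist_le_sqrt_of_one_sub_le_re_inner (𝕜 := ℂ) hψ (by simp only [hAn, hBn, hψ]) h3) ?_
  rw [← dist_neg_neg, neg_neg]
  refine dist_le_sqrt_of_one_sub_le_re_inner (𝕜 := ℂ) hψ (by simp only [norm_neg, hAn, hψ]) ?_
  rwa [inner_neg_right, map_neg, ← ge_iff_le]

/-- in a complex Hilbert space `H`, let `ψ` be a unit vector,
`0 ≤ ε ≤ 1`, and let `A₁,A₂,A₃,B₁,B₂,B₃` be observables satisfying the
compatibility relations.  If the four correlators of `I₃` are each within `ε` of
their ideal values (`Re⟨ψ, A₁B₂B₃ψ⟩ ≥ 1−ε`, `Re⟨ψ, B₁A₂B₃ψ⟩ ≥ 1−ε`,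
`Re⟨ψ, B₁B₂A₃ψ⟩ ≥ 1−ε`, `−Re⟨ψ, A₁A₂A₃ψ⟩ ≥ 1−ε`), then
`‖(AᵢBᵢ + BᵢAᵢ)ψ‖ ≤ 4√(2ε)` for every `i ∈ {1,2,3}`. -/
theorem stmt16 {H : Type*} [NormedAddCommGroup H] [InnerProductSpace ℂ H]
    (A B : Fin 3 → H →L[ℂ] H)
    (hAsa : ∀ i (x y : H), (inner ℂ (A i x) y : ℂ) = inner ℂ x (A i y))
    (hBsa : ∀ i (x y : H), (inner ℂ (B i x) y : ℂ) = inner ℂ x (B i y))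
    (hAinv : ∀ i (x : H), A i (A i x) = x)
    (hBinv : ∀ i (x : H), B i (B i x) = x)
    (hAA : ∀ i j, i ≠ j → ∀ x : H, A i (A j x) = A j (A i x))
    (hAB : ∀ i j, i ≠ j → ∀ x : H, A i (B j x) = B j (A i x))
    (hBB : ∀ i j, i ≠ j → ∀ x : H, B i (B j x) = B j (B i x))
    (ψ : H) (hψ : ‖ψ‖ = 1)
    (ε : ℝ) (hε0 : 0 ≤ ε) (hε1 : ε ≤ 1)
    (h1 : (inner ℂ ψ (A 0 (B 1 (B 2 ψ))) : ℂ).re ≥ 1 - ε)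
    (h2 : (inner ℂ ψ (B 0 (A 1 (B 2 ψ))) : ℂ).re ≥ 1 - ε)
    (h3 : (inner ℂ ψ (B 0 (B 1 (A 2 ψ))) : ℂ).re ≥ 1 - ε)
    (h4 : -(inner ℂ ψ (A 0 (A 1 (A 2 ψ))) : ℂ).re ≥ 1 - ε) :
    ∀ i, ‖A i (B i ψ) + B i (A i ψ)‖ ≤ 4 * Real.sqrt (2 * ε) :=
  stmt16_general A B hAsa hBsa hAinv hBinv hAA hAB hBB ψ hψ ε h1 h2 h3 h4
end

section
/- (Jordan's lemma.) Let A and B be self-adjoint involutions on a finite-dimensional complex inner product space H. Then H decomposes as an orthogonal internal direct sum H = ⊕_l H_l of subspaces H_l, each of dimension 1 or 2, such that every H_l is invariant under both A and B (A(H_l) ⊆ H_l and B(H_l) ⊆ H_l for all l). -/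
/-!
Induct on `A`-, `B`-invariant subspaces `U`. An eigenvector `v ∈ U` of `A B` spans, together with
`B v`, a subspace `P ⊆ U` of dimension 1 or 2 that is invariant under both involutions. Since `A`
and `B` are self-adjoint, `Pᗮ ⊓ U` is again invariant and strictly smaller than `U`, and
`U = P ⊔ (Pᗮ ⊓ U)` orthogonally.
-/

open Module Module.End Submodule

theorem Matrix.iSup_vecCons {α : Type*} [CompleteLattice α] {n : ℕ} (a : α)
    (f : Fin n → α) :
    ⨆ i, vecCons a f i = a ⊔ ⨆ i, f i :=
  eq_of_forall_ge_iff fun c => by simp [Fin.forall_fin_succ]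

theorem Matrix.pairwise_vecCons {α : Type*} {r : α → α → Prop}
    (hr : ∀ ⦃a b⦄, r a b → r b a) {n : ℕ} {a : α} {f : Fin n → α}
    (ha : ∀ i, r a (f i))
    (hf : Pairwise fun i j => r (f i) (f j)) :
    Pairwise fun i j => r (vecCons a f i) (vecCons a f j) := by
  intro i j hij
  cases i using Fin.cases <;> cases j using Fin.cases
  · exact absurd rfl hij
  · exact ha _
  · exact hr (ha _)
  · exact hf (ne_of_apply_ne Fin.succ hij)

theorem Submodule.finrank_span_pair_eq_one_or_two {K V : Type*} [Field K] [AddCommGroup V]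
    [Module K V] {v : V} (hv : v ≠ 0) (w : V) :
    finrank K (span K {v, w}) = 1 ∨ finrank K (span K {v, w}) = 2 := by
  classical
  have hle : finrank K (span K {v, w}) ≤ 2 := by
    have h := (finrank_span_finset_le_card (R := K) {v, w}).trans Finset.card_le_two
    rwa [Finset.coe_insert, Finset.coe_singleton] at h
  have : Module.Finite K (span K {v, w}) := Module.Finite.span_of_finite K (Set.toFinite _)
  have hpos : finrank K (span K {v, w}) ≠ 0 := by
    rw [Ne, finrank_eq_zero, span_eq_bot]
    simp [hv]
  omega

theorem Module.End.exists_hasEigenvector_of_mem_invtSubmodule {K V : Type*} [Field K]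
    [IsAlgClosed K] [AddCommGroup V] [Module K V] [FiniteDimensional K V] {f : End K V}
    {U : Submodule K V} (hU : U ∈ invtSubmodule f) (hU0 : U ≠ ⊥) :
    ∃ μ, ∃ v ∈ U, f.HasEigenvector μ v := by
  have : Nontrivial U := nontrivial_iff_ne_bot.2 hU0
  obtain ⟨μ, hμ⟩ := exists_eigenvalue (f.restrict hU)
  obtain ⟨w, hw⟩ := hμ.exists_hasEigenvector
  refine ⟨μ, w, w.2, hasEigenvector_iff.2 ⟨?_, by simpa using hw.2⟩⟩
  exact mem_eigenspace_iff.2 (congrArg Subtype.val hw.apply_eq_smul)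

section Involutions

variable {K V : Type*} [Field K] [AddCommGroup V] [Module K V] {A B : V →ₗ[K] V}

theorem span_pair_mem_invtSubmodule {f : V →ₗ[K] V} {v w : V} (hv : f v ∈ span K {v, w})
    (hw : f w ∈ span K {v, w}) : span K {v, w} ∈ invtSubmodule f :=
  span_le.2 (Set.insert_subset_iff.2 ⟨hv, Set.singleton_subset_iff.2 hw⟩)

theorem span_apply_pair_mem_invtSubmodule (hB : ∀ x, B (B x) = x) (v : V) :
    span K {v, B v} ∈ invtSubmodule B := by
  refine span_pair_mem_invtSubmodule (subset_span ?_) (subset_span ?_) <;> simp [hB]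

/-- Applying `A` to `A (B v) = μ • v` gives `B v = μ • A v`, and `μ ≠ 0` because `A B` is
invertible. -/
theorem span_apply_pair_mem_invtSubmodule_of_hasEigenvector (hA : ∀ x, A (A x) = x)
    (hB : ∀ x, B (B x) = x) {μ : K} {v : V} (hv : HasEigenvector (A ∘ₗ B) μ v) :
    span K {v, B v} ∈ invtSubmodule A := by
  have hABv : A (B v) = μ • v := hv.apply_eq_smul
  have hBv : B v = μ • A v := by rw [← hA (B v), hABv, map_smul]
  have hμ : μ ≠ 0 := by
    rintro rfl
    exact hv.2 (by rw [← hB v, hBv, zero_smul, map_zero])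
  have hAv : A v = μ⁻¹ • B v := by rw [hBv, inv_smul_smul₀ hμ]
  refine span_pair_mem_invtSubmodule ?_ ?_
  · rw [hAv]; exact smul_mem _ _ (subset_span (by simp))
  · rw [hABv]; exact smul_mem _ _ (subset_span (by simp))

end Involutions

section InnerProductSpace

variable {𝕜 E : Type*} [RCLike 𝕜] [NormedAddCommGroup E] [InnerProductSpace 𝕜 E]

theorem LinearMap.IsSymmetric.orthogonal_mem_invtSubmodule {T : E →ₗ[𝕜] E}
    (hT : T.IsSymmetric) {U : Submodule 𝕜 E} (hU : U ∈ invtSubmodule T) :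
    Uᗮ ∈ invtSubmodule T := by
  intro x hx u hu
  rw [← hT u x]
  exact hx _ (hU hu)

structure IsJordanDecomposition (A B : E →ₗ[𝕜] E) (U : Submodule 𝕜 E) {m : ℕ}
    (W : Fin m → Submodule 𝕜 E) : Prop where
  finrank_eq : ∀ l, finrank 𝕜 (W l) = 1 ∨ finrank 𝕜 (W l) = 2
  pairwise_isOrtho : Pairwise fun l l' => W l ⟂ W l'
  mem_invtSubmodule_left : ∀ l, W l ∈ invtSubmodule A
  mem_invtSubmodule_right : ∀ l, W l ∈ invtSubmodule B
  iSup_eq : ⨆ l, W l = U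

namespace IsJordanDecomposition

variable {A B : E →ₗ[𝕜] E}

theorem bot : IsJordanDecomposition A B ⊥ (![] : Fin 0 → Submodule 𝕜 E) where
  finrank_eq := nofun
  pairwise_isOrtho := nofun
  mem_invtSubmodule_left := nofun
  mem_invtSubmodule_right := nofun
  iSup_eq := iSup_of_empty _

theorem cons {U P : Submodule 𝕜 E} {m : ℕ} {W : Fin m → Submodule 𝕜 E}
    (hW : IsJordanDecomposition A B U W) (hP : finrank 𝕜 P = 1 ∨ finrank 𝕜 P = 2)
    (hPA : P ∈ invtSubmodule A) (hPB : P ∈ invtSubmodule B) (hPU : P ⟂ U) :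
    IsJordanDecomposition A B (P ⊔ U) (Matrix.vecCons P W) where
  finrank_eq := Fin.cases hP hW.finrank_eq
  pairwise_isOrtho := Matrix.pairwise_vecCons (r := IsOrtho) (fun _ _ => IsOrtho.symm)
    (fun l => hPU.mono_right ((le_iSup W l).trans hW.iSup_eq.le)) hW.pairwise_isOrtho
  mem_invtSubmodule_left := Fin.cases hPA hW.mem_invtSubmodule_left
  mem_invtSubmodule_right := Fin.cases hPB hW.mem_invtSubmodule_right
  iSup_eq := by rw [Matrix.iSup_vecCons, hW.iSup_eq]

end IsJordanDecomposition

end InnerProductSpace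

theorem exists_isJordanDecomposition {H : Type*} [NormedAddCommGroup H] [InnerProductSpace ℂ H]
    [FiniteDimensional ℂ H] {A B : H →ₗ[ℂ] H} (hAsa : A.IsSymmetric) (hBsa : B.IsSymmetric)
    (hA2 : ∀ x, A (A x) = x) (hB2 : ∀ x, B (B x) = x) (U : Submodule ℂ H)
    (hUA : U ∈ invtSubmodule A) (hUB : U ∈ invtSubmodule B) :
    ∃ (m : ℕ) (W : Fin m → Submodule ℂ H), IsJordanDecomposition A B U W := by
  induction U using WellFoundedLT.induction with
  | _ U ih =>
  rcases eq_or_ne U ⊥ with rfl | hU0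
  · exact ⟨0, ![], IsJordanDecomposition.bot⟩
  obtain ⟨μ, v, hvU, hv⟩ :=
    exists_hasEigenvector_of_mem_invtSubmodule (invtSubmodule.comp A hUA hUB) hU0
  set P := span ℂ {v, B v}
  have hPA : P ∈ invtSubmodule A :=
    span_apply_pair_mem_invtSubmodule_of_hasEigenvector hA2 hB2 hv
  have hPB : P ∈ invtSubmodule B := span_apply_pair_mem_invtSubmodule hB2 v
  have hPU : P ≤ U :=
    span_le.2 (Set.insert_subset_iff.2 ⟨hvU, Set.singleton_subset_iff.2 (hUB hvU)⟩)
  have hlt : Pᗮ ⊓ U < U := by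
    refine inf_le_right.lt_of_ne fun h => hv.2 ?_
    have hvP : v ∈ P := subset_span (by simp)
    exact inner_self_eq_zero.1 (inner_right_of_mem_orthogonal hvP (h.ge hvU).1)
  obtain ⟨m, W, hW⟩ := ih _ hlt
    (invtSubmodule.inf_mem (hAsa.orthogonal_mem_invtSubmodule hPA) hUA)
    (invtSubmodule.inf_mem (hBsa.orthogonal_mem_invtSubmodule hPB) hUB)
  refine ⟨m + 1, Matrix.vecCons P W, ?_⟩
  rw [← sup_orthogonal_inf_of_hasOrthogonalProjection hPU]
  exact hW.cons (finrank_span_pair_eq_one_or_two hv.2 _) hPA hPB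
    ((isOrtho_orthogonal_right P).mono_right inf_le_left)

/-- Jordan's lemma: if `A`, `B` are self-adjoint involutions on a
finite-dimensional complex inner product space `H`, then `H` decomposes as an
orthogonal internal direct sum `H = ⊕_l H_l` of subspaces of dimension `1` or `2`,
each invariant under both `A` and `B`. -/
theorem stmt18 {H : Type*} [NormedAddCommGroup H] [InnerProductSpace ℂ H]
    [FiniteDimensional ℂ H]
    (A B : H →ₗ[ℂ] H)
    (hAsa : ∀ x y : H, (inner ℂ (A x) y : ℂ) = inner ℂ x (A y))
    (hBsa : ∀ x y : H, (inner ℂ (B x) y : ℂ) = inner ℂ x (B y))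
    (hA2 : ∀ x, A (A x) = x) (hB2 : ∀ x, B (B x) = x) :
    ∃ (m : ℕ) (W : Fin m → Submodule ℂ H),
      (∀ l, Module.finrank ℂ (W l) = 1 ∨ Module.finrank ℂ (W l) = 2) ∧
      (∀ l l', l ≠ l' → ∀ x ∈ W l, ∀ y ∈ W l', (inner ℂ x y : ℂ) = 0) ∧
      (∀ l, ∀ x ∈ W l, A x ∈ W l ∧ B x ∈ W l) ∧
      (⨆ l, W l) = ⊤ := by
  obtain ⟨m, W, hW⟩ := exists_isJordanDecomposition hAsa hBsa hA2 hB2 ⊤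
    (invtSubmodule.top_mem A) (invtSubmodule.top_mem B)
  refine ⟨m, W, hW.finrank_eq,
    fun l l' hll' => isOrtho_iff_inner_eq.1 (hW.pairwise_isOrtho hll'),
    fun l x hx => ⟨hW.mem_invtSubmodule_left l hx, hW.mem_invtSubmodule_right l hx⟩,
    hW.iSup_eq⟩
end
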